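/- Let Δ > 0, let U be a real random variable uniformly distributed on [−Δ/2, Δ/2], and let X be any real random variable independent of U. Then the law of X + U is not a Gaussian measure: for every m ∈ ℝ and every v ≥ 0, the distribution of X + U is not equal to the Gaussian distribution on ℝ with mean m and variance v. -/

import Mathlib

/-!
The characteristic function of the uniform law on `[-Δ/2, Δ/2]` is `t ↦ sin (tΔ/2) / (tΔ/2)`,
which vanishes at `t = 2π/Δ`. By independence the characteristic function of `X + U` is a
multiple of it, so it vanishes there too, whereas a Gaussian characteristic function is an
exponential and never vanishes.
-/

open MeasureTheory ProbabilityTheory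

/-- The uniform probability measure on the interval `[-Δ/2, Δ/2]`. -/
noncomputable def uniformDitherMeasure (Δ : ℝ) : Measure ℝ :=
  (ENNReal.ofReal Δ)⁻¹ • volume.restrict (Set.Icc (-(Δ / 2)) (Δ / 2))

open Complex

lemma charFun_volume_restrict_Icc_neg {a t : ℝ} (ha : 0 ≤ a) (ht : t ≠ 0) :
    charFun (volume.restrict (Set.Icc (-a) a)) t = 2 * Real.sin (t * a) / t := by
  have htI : (t : ℂ) * I ≠ 0 := mul_ne_zero (ofReal_ne_zero.mpr ht) I_ne_zero
  rw [charFun_apply_real, integral_Icc_eq_integral_Ioc,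
    ← intervalIntegral.integral_of_le (neg_le_self ha)]
  simp_rw [mul_right_comm _ _ I]
  rw [integral_exp_mul_complex htI, ofReal_sin, Complex.sin]
  push_cast
  field_simp
  ring_nf
  simp only [I_sq]
  ring

lemma charFun_uniformDitherMeasure_two_pi_div {Δ : ℝ} (hΔ : 0 < Δ) :
    charFun (uniformDitherMeasure Δ) (2 * Real.pi / Δ) = 0 := by
  have hπ : 2 * Real.pi / Δ * (Δ / 2) = Real.pi := by field_simp
  rw [uniformDitherMeasure, charFun, integral_smul_measure, ← charFun,
    charFun_volume_restrict_Icc_neg (by positivity) (by positivity)]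
  simp [hπ]

lemma charFun_gaussianReal_ne_zero (m : ℝ) (v : NNReal) (t : ℝ) :
    charFun (gaussianReal m v) t ≠ 0 := by
  rw [charFun_gaussianReal]
  exact exp_ne_zero _

/-- The sum of an arbitrary real random variable `X` and an independent random variable
`U` uniformly distributed on `[-Δ/2, Δ/2]` (with `Δ > 0`) is never Gaussian: its law
differs from the Gaussian law of every mean `m` and every variance `v ≥ 0`. -/
theorem stmt_8 {Ω : Type*} [MeasurableSpace Ω] (P : Measure Ω) [IsProbabilityMeasure P]
    (Δ : ℝ) (hΔ : 0 < Δ) (X U : Ω → ℝ) (hX : Measurable X) (hU : Measurable U)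
    (hindep : IndepFun X U P)
    (hunif : Measure.map U P = uniformDitherMeasure Δ) :
    ∀ (m : ℝ) (v : NNReal),
      Measure.map (fun ω => X ω + U ω) P ≠ gaussianReal m v := by
  intro m v hgauss
  have hmul := congrFun (hindep.charFun_map_fun_add_eq_mul hX.aemeasurable hU.aemeasurable)
    (2 * Real.pi / Δ)
  rw [Pi.mul_apply, hgauss, hunif, charFun_uniformDitherMeasure_two_pi_div hΔ, mul_zero] at hmul
  exact charFun_gaussianReal_ne_zero m v _ hmul
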